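/- Let A and H₀ be real constants with A ≠ 0 and H₀ > 0. Suppose H : ℝ → ℝ is differentiable, satisfies H'(t) = A·(H(t)² − H₀²) for every t ∈ ℝ, and is not a constant function. Then there exists t₀ ∈ ℝ such that H(t) = −H₀·tanh(A·H₀·(t − t₀)) for all t ∈ ℝ; in particular, up to time translation, H(t) = −H₀·tanh(A·H₀·t) is the unique non-constant solution of this ODE defined on all of ℝ. -/

import Mathlib

/-!
A solution that touches an equilibrium `±H₀` is constant, because `H ∓ H₀` solves the linear
equation `u' = A (H ± H₀) u`. Otherwise the Cayley transform `w = (H - H₀) / (H + H₀)` is defined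
everywhere and solves `w' = 2 A H₀ w`, so `w = w(0) exp (2 A H₀ t)`. As `w` never takes the value
`1` and `exp` of a nonconstant linear function takes every positive value, `w(0) < 0`; writing
`w(0) = -exp (-2 A H₀ t₀)` and inverting the transform gives the `tanh` profile.
-/

open Real

theorem Real.tanh_eq_exp_two_mul_div (x : ℝ) :
    tanh x = (exp (2 * x) - 1) / (exp (2 * x) + 1) := by
  have h2 : exp (2 * x) = exp x * exp x := by rw [two_mul, exp_add]
  rw [tanh_eq_sinh_div_cosh, sinh_eq, cosh_eq, exp_neg, h2]
  field_simp

theorem eq_mul_exp_integral_of_hasDerivAt_mul {g u : ℝ → ℝ} (hg : Continuous g)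
    (hu : ∀ t, HasDerivAt u (g t * u t) t) (s t : ℝ) :
    u t = u s * exp (∫ x in s..t, g x) := by
  set G : ℝ → ℝ := fun t => ∫ x in s..t, g x
  have hG : ∀ t, HasDerivAt G (g t) t := fun t =>
    intervalIntegral.integral_hasDerivAt_right (hg.intervalIntegrable s t)
      hg.aestronglyMeasurable.stronglyMeasurableAtFilter hg.continuousAt
  have hconst : ∀ t, HasDerivAt (fun t => u t * exp (-G t)) 0 t := fun t => by
    have hexp : HasDerivAt (fun t => exp (-G t)) (exp (-G t) * -g t) t := (hG t).neg.exp
    exact ((hu t).fun_mul hexp).congr_deriv (by ring)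
  have := is_const_of_deriv_eq_zero (fun x => (hconst x).differentiableAt)
      (fun x => (hconst x).deriv) t s
  simp only [G, intervalIntegral.integral_same, neg_zero, exp_zero, mul_one] at this
  rw [← this, mul_assoc, ← exp_add, neg_add_cancel, exp_zero, mul_one]

theorem eq_zero_of_hasDerivAt_mul_of_eq_zero {g u : ℝ → ℝ} (hg : Continuous g)
    (hu : ∀ t, HasDerivAt u (g t * u t) t) {s : ℝ} (hs : u s = 0) (t : ℝ) : u t = 0 := by
  rw [eq_mul_exp_integral_of_hasDerivAt_mul hg hu s t, hs, zero_mul]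

theorem eq_mul_exp_of_hasDerivAt_const_mul {c : ℝ} {u : ℝ → ℝ}
    (hu : ∀ t, HasDerivAt u (c * u t) t) (t : ℝ) : u t = u 0 * exp (c * t) := by
  simpa [mul_comm t] using eq_mul_exp_integral_of_hasDerivAt_mul continuous_const hu 0 t

theorem exists_mul_exp_eq_neg_exp_sub {c w₀ : ℝ} (hc : c ≠ 0) (hw₀ : w₀ ≠ 0)
    (hne : ∀ t, w₀ * exp (c * t) ≠ 1) : ∃ t₀, ∀ t, w₀ * exp (c * t) = -exp (c * (t - t₀)) := by
  have hneg : w₀ < 0 := by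
    refine hw₀.lt_or_gt.resolve_right fun hpos => hne (-log w₀ / c) ?_
    rw [mul_div_cancel₀ _ hc, exp_neg, exp_log hpos, mul_inv_cancel₀ hw₀]
  refine ⟨-log (-w₀) / c, fun t => ?_⟩
  rw [mul_sub, mul_div_cancel₀ _ hc, sub_neg_eq_add, exp_add, exp_log (neg_pos.mpr hneg)]
  ring

theorem eq_neg_mul_tanh_of_div_eq_neg_exp {h H₀ x : ℝ} (hh : h + H₀ ≠ 0)
    (hw : (h - H₀) / (h + H₀) = -exp (2 * x)) : h = -H₀ * tanh x := by
  rw [div_eq_iff hh] at hw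
  rw [tanh_eq_exp_two_mul_div, eq_comm, ← sub_eq_zero]
  field_simp
  linear_combination -hw

section Riccati

variable {A H₀ : ℝ} {H : ℝ → ℝ} (hH : ∀ t, HasDerivAt H (A * (H t ^ 2 - H₀ ^ 2)) t)
include hH

theorem riccati_eq_const_of_eq {e : ℝ} (he : e ^ 2 = H₀ ^ 2) {s : ℝ} (hs : H s = e) (t : ℝ) :
    H t = e := by
  have hcont : Continuous H := continuous_iff_continuousAt.mpr fun t => (hH t).continuousAt
  have hsub : ∀ t, HasDerivAt (fun t => H t - e) (A * (H t + e) * (H t - e)) t := fun t =>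
    ((hH t).sub_const e).congr_deriv (by rw [← he]; ring)
  have := eq_zero_of_hasDerivAt_mul_of_eq_zero (by fun_prop) hsub (sub_eq_zero.mpr hs) t
  exact sub_eq_zero.mp this

theorem riccati_hasDerivAt_cayley (hne : ∀ t, H t + H₀ ≠ 0) (t : ℝ) :
    HasDerivAt (fun t => (H t - H₀) / (H t + H₀))
      (2 * A * H₀ * ((H t - H₀) / (H t + H₀))) t :=
  (((hH t).sub_const H₀).div ((hH t).add_const H₀) (hne t)).congr_deriv (by
    field_simp [hne t]
    ring)

end Riccati

theorem cpo_hubble_ode_unique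
    (A H₀ : ℝ) (hA : A ≠ 0) (hH₀ : 0 < H₀) (H : ℝ → ℝ)
    (hdiff : Differentiable ℝ H)
    (hode : ∀ t : ℝ, deriv H t = A * ((H t)^2 - H₀^2))
    (hnonconst : ¬ ∃ c : ℝ, ∀ t : ℝ, H t = c) :
    ∃ t₀ : ℝ, ∀ t : ℝ, H t = -H₀ * Real.tanh (A * H₀ * (t - t₀)) := by
  have hH : ∀ t, HasDerivAt H (A * (H t ^ 2 - H₀ ^ 2)) t := fun t => hode t ▸ (hdiff t).hasDerivAt
  have hne : ∀ e, e ^ 2 = H₀ ^ 2 → ∀ s, H s ≠ e := fun e he s hs =>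
    hnonconst ⟨e, riccati_eq_const_of_eq hH he hs⟩
  have hplus : ∀ t, H t + H₀ ≠ 0 := fun t h => hne (-H₀) (neg_sq H₀) t (by linarith)
  set w : ℝ → ℝ := fun t => (H t - H₀) / (H t + H₀) with hw_def
  have hw : ∀ t, w t = w 0 * exp (2 * A * H₀ * t) :=
    eq_mul_exp_of_hasDerivAt_const_mul (riccati_hasDerivAt_cayley hH hplus)
  have hw₀ : w 0 ≠ 0 := div_ne_zero (sub_ne_zero.mpr (hne H₀ rfl 0)) (hplus 0)
  have hw_ne_one : ∀ t, w 0 * exp (2 * A * H₀ * t) ≠ 1 := fun t h => by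
    rw [← hw, hw_def, div_eq_one_iff_eq (hplus t)] at h
    linarith
  obtain ⟨t₀, ht₀⟩ := exists_mul_exp_eq_neg_exp_sub (by positivity) hw₀ hw_ne_one
  refine ⟨t₀, fun t => eq_neg_mul_tanh_of_div_eq_neg_exp (hplus t) ?_⟩
  change w t = _
  rw [hw, ht₀]
  ring_nf
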